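/- Let g < 0. For every integer k ≥ 1 and every ε > 0 there exist a real number β with β_k < β < β_k + ε and a GP solution φ on [0,L] with parameter β such that φ is not identically zero on [0,L] and sup_{x ∈ [0,L]} |φ(x)| < ε; moreover −φ is also a GP solution on [0,L] with parameter β, so there are at least two distinct nonzero GP solutions for this β. (Local bifurcation of new quantum states from (0, β_k) to the right of β_k in the attractive case.) -/

import Mathlib

open Set MeasureTheory intervalIntegral Filter Topology

/-- `φ` is a GP solution on `[a,b]` with parameter `β`:
`φ` is continuous on `[a,b]`, twice continuously differentiable on `(a,b)`,
satisfies `-(ℏ²/(4m))·φ'' + (β - ℏλ)·φ + g·φ³ = 0` on `(a,b)`,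
and `φ a = φ b = 0`. -/
def IsGPSolution (ℏ m lam g a b β : ℝ) (φ : ℝ → ℝ) : Prop :=
  ContinuousOn φ (Set.Icc a b) ∧
  ContDiffOn ℝ 2 φ (Set.Ioo a b) ∧
  (∀ x ∈ Set.Ioo a b,
    -(ℏ ^ 2 / (4 * m)) * deriv (deriv φ) x + (β - ℏ * lam) * φ x + g * (φ x) ^ 3 = 0) ∧
  φ a = 0 ∧ φ b = 0

/-- The quantum critical points `β_k = ℏλ - (ℏ²/(4m))·(kπ/L)²`. -/
noncomputable def betaCrit (ℏ m lam L : ℝ) (k : ℕ) : ℝ :=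
  ℏ * lam - (ℏ ^ 2 / (4 * m)) * ((k : ℝ) * Real.pi / L) ^ 2


/-!
For `g = -γ < 0` the ansatz `φ = A sin θ` with `θ' = ρ √(1 + μ sin² θ)` solves
`φ'' = -ρ²(1 - μ) φ - (2μρ²/A²) φ³`, which is the GP equation with
`β = ℏλ - (ℏ²/4m) ρ² (1 - μ)` once `γ A² = 2μρ² ℏ²/(4m)`. The phase `θ` is the inverse of the
time map `y ↦ ∫₀^y du / (ρ √(1 + μ sin² u))`, which is squeezed between `y / (ρ √(1 + μ))` and
`y / ρ`; choosing `ρ` with `θ(L) = kπ` gives the Dirichlet conditions and forces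
`ρ² ≤ (kπ/L)² ≤ ρ² (1 + μ)`. Hence `0 < β - β_k ≤ 2μ (ℏ²/4m) (kπ/L)²` and
`A² ≤ 2μ (ℏ²/4m) (kπ/L)² / γ`, and letting `μ → 0⁺` gives the bifurcation. The nonlinearity is
odd, so `-φ` is a solution as well.
-/

open Real

namespace GrossPitaevskii

noncomputable def phaseSpeed (μ ρ u : ℝ) : ℝ := ρ * √(1 + μ * sin u ^ 2)

noncomputable def phaseTime (μ ρ y : ℝ) : ℝ := ∫ u in (0 : ℝ)..y, (phaseSpeed μ ρ u)⁻¹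

noncomputable def phase (μ ρ : ℝ) : ℝ → ℝ := Function.invFun (phaseTime μ ρ)

variable {μ ρ : ℝ}

lemma one_le_one_add_mul_sin_sq (hμ : 0 ≤ μ) (u : ℝ) : 1 ≤ 1 + μ * sin u ^ 2 :=
  le_add_of_nonneg_right (by positivity)

lemma one_add_mul_sin_sq_le (hμ : 0 ≤ μ) (u : ℝ) : 1 + μ * sin u ^ 2 ≤ 1 + μ := by
  nlinarith [sin_sq_le_one u]

lemma phaseSpeed_pos (hμ : 0 ≤ μ) (hρ : 0 < ρ) (u : ℝ) : 0 < phaseSpeed μ ρ u :=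
  mul_pos hρ (sqrt_pos.2 (one_pos.trans_le (one_le_one_add_mul_sin_sq hμ u)))

lemma le_phaseSpeed (hμ : 0 ≤ μ) (hρ : 0 ≤ ρ) (u : ℝ) : ρ ≤ phaseSpeed μ ρ u :=
  le_mul_of_one_le_right hρ (one_le_sqrt.2 (one_le_one_add_mul_sin_sq hμ u))

lemma phaseSpeed_le (hμ : 0 ≤ μ) (hρ : 0 ≤ ρ) (u : ℝ) : phaseSpeed μ ρ u ≤ ρ * √(1 + μ) :=
  mul_le_mul_of_nonneg_left (sqrt_le_sqrt (one_add_mul_sin_sq_le hμ u)) hρ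

lemma contDiff_phaseSpeed (hμ : 0 ≤ μ) {n : WithTop ℕ∞} : ContDiff ℝ n (phaseSpeed μ ρ) := by
  refine contDiff_const.mul (contDiff_iff_contDiffAt.2 fun u => ?_)
  exact (contDiffAt_sqrt (one_pos.trans_le (one_le_one_add_mul_sin_sq hμ u)).ne').comp u
    (contDiff_const.add (contDiff_const.mul (contDiff_sin.pow 2))).contDiffAt

lemma hasDerivAt_phaseSpeed (hμ : 0 ≤ μ) (u : ℝ) :
    HasDerivAt (phaseSpeed μ ρ) (ρ ^ 2 * μ * sin u * cos u / phaseSpeed μ ρ u) u := by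
  have hpos : 0 < 1 + μ * sin u ^ 2 := one_pos.trans_le (one_le_one_add_mul_sin_sq hμ u)
  refine (((((hasDerivAt_sin u).pow 2).const_mul μ).const_add 1).sqrt hpos.ne').const_mul ρ
    |>.congr_deriv ?_
  have hsqrt := sqrt_pos.2 hpos
  simp only [phaseSpeed, Pi.pow_apply]
  field_simp
  ring

lemma continuous_inv_phaseSpeed (hμ : 0 ≤ μ) (hρ : 0 < ρ) :
    Continuous fun u => (phaseSpeed μ ρ u)⁻¹ :=
  (contDiff_phaseSpeed hμ (n := 0)).continuous.inv₀ fun u => (phaseSpeed_pos hμ hρ u).ne'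

lemma hasDerivAt_phaseTime (hμ : 0 ≤ μ) (hρ : 0 < ρ) (y : ℝ) :
    HasDerivAt (phaseTime μ ρ) (phaseSpeed μ ρ y)⁻¹ y :=
  have hc := continuous_inv_phaseSpeed hμ hρ
  integral_hasDerivAt_right (hc.intervalIntegrable _ _)
    hc.stronglyMeasurable.stronglyMeasurableAtFilter hc.continuousAt

@[simp] lemma phaseTime_zero : phaseTime μ ρ 0 = 0 := integral_same

lemma strictMono_phaseTime (hμ : 0 ≤ μ) (hρ : 0 < ρ) : StrictMono (phaseTime μ ρ) :=
  strictMono_of_deriv_pos fun y => by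
    rw [(hasDerivAt_phaseTime hμ hρ y).deriv]
    exact inv_pos.2 (phaseSpeed_pos hμ hρ y)

lemma phaseTime_eq_inv_mul (μ ρ y : ℝ) : phaseTime μ ρ y = ρ⁻¹ * phaseTime μ 1 y := by
  simp only [phaseTime, phaseSpeed, one_mul, mul_inv, intervalIntegral.integral_const_mul]

lemma mul_inv_le_phaseTime (hμ : 0 ≤ μ) (hρ : 0 < ρ) {y : ℝ} (hy : 0 ≤ y) :
    y * (ρ * √(1 + μ))⁻¹ ≤ phaseTime μ ρ y := by
  have h := integral_mono_on (μ := volume) hy intervalIntegrable_const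
    ((continuous_inv_phaseSpeed hμ hρ).intervalIntegrable _ _)
    fun u _ => inv_anti₀ (phaseSpeed_pos hμ hρ u) (phaseSpeed_le hμ hρ.le u)
  rwa [intervalIntegral.integral_const, smul_eq_mul, sub_zero] at h

lemma phaseTime_le_mul_inv (hμ : 0 ≤ μ) (hρ : 0 < ρ) {y : ℝ} (hy : 0 ≤ y) :
    phaseTime μ ρ y ≤ y * ρ⁻¹ := by
  have h := integral_mono_on (μ := volume) hy
    ((continuous_inv_phaseSpeed hμ hρ).intervalIntegrable _ _) intervalIntegrable_const
    fun u _ => inv_anti₀ hρ (le_phaseSpeed hμ hρ.le u)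
  rwa [intervalIntegral.integral_const, smul_eq_mul, sub_zero] at h

lemma phaseTime_le_mul_inv_of_nonpos (hμ : 0 ≤ μ) (hρ : 0 < ρ) {y : ℝ} (hy : y ≤ 0) :
    phaseTime μ ρ y ≤ y * (ρ * √(1 + μ))⁻¹ := by
  have h := integral_mono_on (μ := volume) hy intervalIntegrable_const
    ((continuous_inv_phaseSpeed hμ hρ).intervalIntegrable _ _)
    fun u _ => inv_anti₀ (phaseSpeed_pos hμ hρ u) (phaseSpeed_le hμ hρ.le u)
  rw [intervalIntegral.integral_const, smul_eq_mul] at h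
  rw [phaseTime, integral_symm]
  linarith

lemma surjective_phaseTime (hμ : 0 ≤ μ) (hρ : 0 < ρ) : Function.Surjective (phaseTime μ ρ) := by
  have hC : 0 < (ρ * √(1 + μ))⁻¹ := by positivity
  refine Continuous.surjective
    (continuous_iff_continuousAt.2 fun y => (hasDerivAt_phaseTime hμ hρ y).continuousAt) ?_ ?_
  · refine tendsto_atTop_mono' atTop ?_ (tendsto_id.atTop_mul_const hC)
    filter_upwards [eventually_ge_atTop 0] with y hy using mul_inv_le_phaseTime hμ hρ hy
  · refine tendsto_atBot_mono' atBot ?_ (tendsto_id.atBot_mul_const hC)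
    filter_upwards [eventually_le_atBot 0] with y hy using phaseTime_le_mul_inv_of_nonpos hμ hρ hy

lemma phaseTime_phase (hμ : 0 ≤ μ) (hρ : 0 < ρ) (x : ℝ) : phaseTime μ ρ (phase μ ρ x) = x :=
  Function.invFun_eq (surjective_phaseTime hμ hρ x)

lemma phase_phaseTime (hμ : 0 ≤ μ) (hρ : 0 < ρ) (y : ℝ) : phase μ ρ (phaseTime μ ρ y) = y :=
  Function.leftInverse_invFun (strictMono_phaseTime hμ hρ).injective y

lemma phase_zero (hμ : 0 ≤ μ) (hρ : 0 < ρ) : phase μ ρ 0 = 0 := by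
  simpa using phase_phaseTime hμ hρ 0

lemma continuous_phase (hμ : 0 ≤ μ) (hρ : 0 < ρ) : Continuous (phase μ ρ) := by
  refine Monotone.continuous_of_surjective (fun x y hxy => ?_)
    fun y => ⟨_, phase_phaseTime hμ hρ y⟩
  rwa [← (strictMono_phaseTime hμ hρ).le_iff_le, phaseTime_phase hμ hρ, phaseTime_phase hμ hρ]

lemma hasDerivAt_phase (hμ : 0 ≤ μ) (hρ : 0 < ρ) (x : ℝ) :
    HasDerivAt (phase μ ρ) (phaseSpeed μ ρ (phase μ ρ x)) x := by
  have h := (hasDerivAt_phaseTime hμ hρ (phase μ ρ x)).of_local_left_inverse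
    (continuous_phase hμ hρ).continuousAt (inv_ne_zero (phaseSpeed_pos hμ hρ _).ne')
    (.of_forall (phaseTime_phase hμ hρ))
  rwa [inv_inv] at h

open scoped ContDiff in
lemma contDiff_phase (hμ : 0 ≤ μ) (hρ : 0 < ρ) : ContDiff ℝ ∞ (phase μ ρ) := by
  have hderiv : deriv (phase μ ρ) = phaseSpeed μ ρ ∘ phase μ ρ :=
    funext fun x => (hasDerivAt_phase hμ hρ x).deriv
  refine contDiff_infty.2 fun n => ?_
  induction n with
  | zero => exact contDiff_zero.2 (continuous_phase hμ hρ)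
  | succ n ih =>
    rw [Nat.cast_add_one, contDiff_succ_iff_deriv, hderiv]
    refine ⟨fun x => (hasDerivAt_phase hμ hρ x).differentiableAt, by simp, ?_⟩
    exact (contDiff_phaseSpeed hμ).comp ih

lemma hasDerivAt_sin_phase (hμ : 0 ≤ μ) (hρ : 0 < ρ) (x : ℝ) :
    HasDerivAt (fun x => sin (phase μ ρ x))
      (cos (phase μ ρ x) * phaseSpeed μ ρ (phase μ ρ x)) x :=
  (hasDerivAt_sin _).comp x (hasDerivAt_phase hμ hρ x)

lemma hasDerivAt_deriv_sin_phase (hμ : 0 ≤ μ) (hρ : 0 < ρ) (x : ℝ) :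
    HasDerivAt (deriv fun x => sin (phase μ ρ x))
      (-(ρ ^ 2 * (1 - μ)) * sin (phase μ ρ x) - 2 * μ * ρ ^ 2 * sin (phase μ ρ x) ^ 3) x := by
  rw [funext fun x => (hasDerivAt_sin_phase hμ hρ x).deriv]
  have hθ := hasDerivAt_phase hμ hρ x
  refine (((hasDerivAt_cos _).comp x hθ).mul ((hasDerivAt_phaseSpeed hμ _).comp x hθ))
    |>.congr_deriv ?_
  simp only [Function.comp_apply]
  generalize phase μ ρ x = θ
  have hH : phaseSpeed μ ρ θ ^ 2 = ρ ^ 2 * (1 + μ * sin θ ^ 2) := by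
    rw [phaseSpeed, mul_pow, sq_sqrt (one_pos.trans_le (one_le_one_add_mul_sin_sq hμ θ)).le]
  have hH0 := (phaseSpeed_pos hμ hρ θ).ne'
  field_simp
  linear_combination (-sin θ) * hH + ρ ^ 2 * μ * sin θ * (cos_sq' θ)

lemma exists_phaseTime_eq (hμ : 0 ≤ μ) {y L : ℝ} (hy : 0 < y) (hL : 0 < L) :
    ∃ ρ > 0, ρ ≤ y / L ∧ (y / L) ^ 2 ≤ ρ ^ 2 * (1 + μ) ∧ phaseTime μ ρ y = L := by
  have hs : 0 < √(1 + μ) := sqrt_pos.2 (by linarith)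
  have hlow := mul_inv_le_phaseTime hμ one_pos hy.le
  have hup := phaseTime_le_mul_inv hμ one_pos hy.le
  rw [one_mul] at hlow
  rw [inv_one, mul_one] at hup
  set J := phaseTime μ 1 y
  have hJ : 0 < J := lt_of_lt_of_le (by positivity) hlow
  have hyJ : y ≤ J * √(1 + μ) := by rwa [← div_eq_mul_inv, div_le_iff₀ hs] at hlow
  refine ⟨J / L, by positivity, by gcongr, ?_, ?_⟩
  · rw [div_pow, div_pow, div_mul_eq_mul_div, ← sq_sqrt (by linarith : 0 ≤ 1 + μ), ← mul_pow]
    gcongr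
  · rw [phaseTime_eq_inv_mul, inv_div]
    exact div_mul_cancel₀ L hJ.ne'

lemma isGPSolution_mul_sin_phase {ℏ m lam g A L : ℝ} (k : ℕ) (hμ : 0 ≤ μ) (hρ : 0 < ρ)
    (hL : phaseTime μ ρ (k * π) = L) (hA : g * A ^ 2 = -(2 * μ * ρ ^ 2 * (ℏ ^ 2 / (4 * m)))) :
    IsGPSolution ℏ m lam g 0 L (ℏ * lam - ℏ ^ 2 / (4 * m) * (ρ ^ 2 * (1 - μ)))
      (fun x => A * sin (phase μ ρ x)) := by
  have hφ : ContDiff ℝ 2 fun x => A * sin (phase μ ρ x) :=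
    contDiff_const.mul (contDiff_sin.comp (contDiff_infty.1 (contDiff_phase hμ hρ) 2))
  refine ⟨hφ.continuous.continuousOn, hφ.contDiffOn, fun x _ => ?_, ?_, ?_⟩
  · rw [deriv_const_mul_field', deriv_const_mul_field,
      (hasDerivAt_deriv_sin_phase hμ hρ x).deriv]
    linear_combination (sin (phase μ ρ x) ^ 3 * A) * hA
  · simp only [phase_zero hμ hρ, sin_zero, mul_zero]
  · simp only [← hL, phase_phaseTime hμ hρ, sin_nat_mul_pi, mul_zero]

lemma exists_isGPSolution_near_betaCrit {ℏ m lam L γ μ : ℝ} {k : ℕ} (hℏ : ℏ ≠ 0) (hm : 0 < m)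
    (hL : 0 < L) (hγ : 0 < γ) (hk : 1 ≤ k) (hμ : 0 < μ) :
    ∃ β A : ℝ, ∃ φ : ℝ → ℝ, IsGPSolution ℏ m lam (-γ) 0 L β φ ∧
      betaCrit ℏ m lam L k < β ∧
      β ≤ betaCrit ℏ m lam L k + 2 * (ℏ ^ 2 / (4 * m)) * (k * π / L) ^ 2 * μ ∧
      0 < A ∧ A ^ 2 ≤ 2 * (ℏ ^ 2 / (4 * m)) * (k * π / L) ^ 2 / γ * μ ∧
      (∃ x ∈ Icc 0 L, φ x = A) ∧ ∀ x, |φ x| ≤ A := by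
  set κ := ℏ ^ 2 / (4 * m)
  set ω := (k : ℝ) * π / L with hω
  have hκ : 0 < κ := by positivity
  have hk1 : (1 : ℝ) ≤ k := by exact_mod_cast hk
  have hkπ : 0 < (k : ℝ) * π := by positivity
  obtain ⟨ρ, hρ, hρω, hωρ, hρL⟩ := exists_phaseTime_eq hμ.le hkπ hL
  rw [← hω] at hρω hωρ
  have hρ2 : ρ ^ 2 ≤ ω ^ 2 := pow_le_pow_left₀ hρ.le hρω 2
  set A := ρ * √(2 * μ * κ / γ)
  have hA2 : A ^ 2 = 2 * κ * ρ ^ 2 / γ * μ := by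
    rw [mul_pow, sq_sqrt (by positivity)]
    ring
  have hA0 : 0 < A := by positivity
  have hsol := isGPSolution_mul_sin_phase (lam := lam) k hμ.le hρ hρL
    (by rw [hA2]; field_simp : -γ * A ^ 2 = -(2 * μ * ρ ^ 2 * κ))
  have hpeak : phaseTime μ ρ (π / 2) ∈ Icc 0 L := by
    have hmono := (strictMono_phaseTime hμ.le hρ).monotone
    rw [← hρL, ← phaseTime_zero (μ := μ) (ρ := ρ)]
    exact ⟨hmono (by positivity), hmono (by nlinarith [pi_pos])⟩
  refine ⟨_, A, _, hsol, ?_, ?_, hA0, ?_, ⟨_, hpeak, ?_⟩, fun x => ?_⟩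
  · show ℏ * lam - κ * ω ^ 2 < ℏ * lam - κ * (ρ ^ 2 * (1 - μ))
    gcongr
    nlinarith [mul_pos hμ (pow_pos hρ 2)]
  · show ℏ * lam - κ * (ρ ^ 2 * (1 - μ)) ≤ ℏ * lam - κ * ω ^ 2 + 2 * κ * ω ^ 2 * μ
    nlinarith [mul_le_mul_of_nonneg_left hρ2 hμ.le]
  · rw [hA2]
    gcongr
  · rw [phase_phaseTime hμ.le hρ, sin_pi_div_two, mul_one]
  · rw [abs_mul, abs_of_pos hA0]
    exact mul_le_of_le_one_right hA0.le (abs_sin_le_one _)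

lemma eventually_mul_lt (a : ℝ) {δ : ℝ} (hδ : 0 < δ) : ∀ᶠ μ in 𝓝[>] (0 : ℝ), a * μ < δ :=
  nhdsWithin_le_nhds <|
    (continuous_const_mul a).tendsto' 0 0 (mul_zero a) |>.eventually (gt_mem_nhds hδ)

end GrossPitaevskii

lemma IsGPSolution.neg {ℏ m lam g a b β : ℝ} {φ : ℝ → ℝ}
    (h : IsGPSolution ℏ m lam g a b β φ) : IsGPSolution ℏ m lam g a b β (fun x => -φ x) := by
  obtain ⟨hcont, hdiff, hode, ha, hb⟩ := h
  refine ⟨hcont.neg, hdiff.neg, fun x hx => ?_, by simp [ha], by simp [hb]⟩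
  rw [deriv.fun_neg', deriv.fun_neg]
  linear_combination -hode x hx

open GrossPitaevskii

/-- for `g < 0`, local bifurcation of new quantum states from `(0, β_k)`
to the right of `β_k` in the attractive case. -/
theorem stmt_1 (ℏ m lam L g : ℝ) (hℏ : 0 < ℏ) (hm : 0 < m) (hL : 0 < L)
    (hg : g < 0) (k : ℕ) (hk : 1 ≤ k) (ε : ℝ) (hε : 0 < ε) :
    ∃ β : ℝ, ∃ φ : ℝ → ℝ,
      betaCrit ℏ m lam L k < β ∧ β < betaCrit ℏ m lam L k + ε ∧
      IsGPSolution ℏ m lam g 0 L β φ ∧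
      (∃ x ∈ Set.Icc (0:ℝ) L, φ x ≠ 0) ∧
      (∀ x ∈ Set.Icc (0:ℝ) L, |φ x| < ε) ∧
      IsGPSolution ℏ m lam g 0 L β (fun x => -φ x) ∧
      (∃ x ∈ Set.Icc (0:ℝ) L, φ x ≠ -φ x) := by
  obtain ⟨γ, hγ, rfl⟩ : ∃ γ > 0, g = -γ := ⟨-g, neg_pos.2 hg, (neg_neg g).symm⟩
  set C := 2 * (ℏ ^ 2 / (4 * m)) * (k * π / L) ^ 2
  obtain ⟨μ, hμβ, hμA, hμ : 0 < μ⟩ :=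
    ((eventually_mul_lt C hε).and ((eventually_mul_lt (C / γ) (pow_pos hε 2)).and
      self_mem_nhdsWithin)).exists
  obtain ⟨β, A, φ, hsol, hβ_gt, hβ_le, hA0, hA2, ⟨x₀, hx₀, hφx₀⟩, hφ_le⟩ :=
    exists_isGPSolution_near_betaCrit (lam := lam) hℏ.ne' hm hL hγ hk hμ
  have hAε : A < ε := lt_of_pow_lt_pow_left₀ 2 hε.le (hA2.trans_lt hμA)
  refine ⟨β, φ, hβ_gt, by linarith, hsol, ⟨x₀, hx₀, by rw [hφx₀]; exact hA0.ne'⟩,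
    fun x _ => (hφ_le x).trans_lt hAε, hsol.neg, ⟨x₀, hx₀, by rw [hφx₀]; linarith⟩⟩
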